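/- Let 𝔊 be a general gradient span algorithm, f : ℝ^N → ℝ a differentiable function, x₀ a starting point, φ(x) = Ux a linear isometry of ℝ^N (U orthogonal), g := f ∘ φ, and y₀ := φ⁻¹(x₀). Then the optimization paths x_n := 𝔊(f, x₀, n) and y_n := 𝔊(g, y₀, n) satisfy y_n = φ⁻¹(x_n) for all n ∈ ℕ. The same holds for all isometries φ(x) = Ux + b provided the algorithm is x₀-agnostic. -/

import Mathlib

open MeasureTheory ProbabilityTheory Filter
open scoped ENNReal NNReal InnerProductSpace Topology BigOperators

noncomputable section

/-- Euclidean space `ℝ^N`. -/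
abbrev EucSp (N : ℕ) : Type := EuclideanSpace ℝ (Fin N)

/-- Convergence in probability (along the dimension index `N → ∞`)
of real random variables to a deterministic constant. -/
def TendstoInProb {Ω : Type*} [MeasurableSpace Ω] (P : Measure Ω)
    (Z : ℕ → Ω → ℝ) (c : ℝ) : Prop :=
  ∀ ε : ℝ, 0 < ε → Tendsto (fun N => P {ω | ε < |Z N ω - c|}) atTop (𝓝 0)

/-- The mean function of a random function. -/
def meanRF {Ω : Type*} [MeasurableSpace Ω] (P : Measure Ω) {N : ℕ}
    (f : Ω → EucSp N → ℝ) (x : EucSp N) : ℝ :=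
  ∫ ω, f ω x ∂P

/-- The covariance function of a random function. -/
def covRF {Ω : Type*} [MeasurableSpace Ω] (P : Measure Ω) {N : ℕ}
    (f : Ω → EucSp N → ℝ) (x y : EucSp N) : ℝ :=
  ∫ ω, (f ω x - meanRF P f x) * (f ω y - meanRF P f y) ∂P

/-- Covariance of two real random variables. -/
def covRV {Ω : Type*} [MeasurableSpace Ω] (P : Measure Ω) (g h : Ω → ℝ) : ℝ :=
  ∫ ω, (g ω - ∫ ω', g ω' ∂P) * (h ω - ∫ ω', h ω' ∂P) ∂P

/-- A Gaussian random function: every finite linear combination of evaluations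
has a (possibly degenerate) Gaussian distribution. -/
def IsGaussianRF {Ω : Type*} [MeasurableSpace Ω] (P : Measure Ω) {N : ℕ}
    (f : Ω → EucSp N → ℝ) : Prop :=
  ∀ (n : ℕ) (x : Fin n → EucSp N) (c : Fin n → ℝ), ∃ (m : ℝ) (v : ℝ≥0),
    Measure.map (fun ω => ∑ i, c i * f ω (x i)) P = gaussianReal m v

/-- A (non-stationary) isotropic scaled random function:
mean `μ(‖x‖²/2)` and covariance `(1/N)·κ(‖x‖²/2, ‖y‖²/2, ⟨x,y⟩)`. -/
def IsIsotropicRF {Ω : Type*} [MeasurableSpace Ω] (P : Measure Ω) {N : ℕ}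
    (f : Ω → EucSp N → ℝ) (μ : ℝ → ℝ) (κ : ℝ → ℝ → ℝ → ℝ) : Prop :=
  (∀ x, meanRF P f x = μ (‖x‖ ^ 2 / 2)) ∧
  (∀ x y, covRF P f x y = (1 / (N : ℝ)) * κ (‖x‖ ^ 2 / 2) (‖y‖ ^ 2 / 2) ⟪x, y⟫_ℝ)

/-- A stationary isotropic scaled random function:
constant mean `μ` and covariance `(1/N)·C(‖x−y‖²/2)`. -/
def IsStationaryIsotropicRF {Ω : Type*} [MeasurableSpace Ω] (P : Measure Ω) {N : ℕ}
    (f : Ω → EucSp N → ℝ) (μ : ℝ) (C : ℝ → ℝ) : Prop :=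
  (∀ x, meanRF P f x = μ) ∧
  (∀ x y, covRF P f x y = (1 / (N : ℝ)) * C (‖x - y‖ ^ 2 / 2))

/-- A (non-stationary) isotropic kernel is valid in all dimensions if a corresponding
(non-stationary) isotropic Gaussian random function exists in every dimension. -/
def ValidInAllDimensions (μ : ℝ → ℝ) (κ : ℝ → ℝ → ℝ → ℝ) : Prop :=
  ∀ N : ℕ, ∃ (Ω' : Type) (_ : MeasurableSpace Ω') (P : Measure Ω') (f : Ω' → EucSp N → ℝ),
    IsProbabilityMeasure P ∧ IsGaussianRF P f ∧ IsIsotropicRF P f μ κ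

/-- A stationary isotropic kernel is valid in all dimensions if a corresponding
stationary isotropic Gaussian random function exists in every dimension. -/
def ValidInAllDimensionsStat (μ : ℝ) (C : ℝ → ℝ) : Prop :=
  ∀ N : ℕ, ∃ (Ω' : Type) (_ : MeasurableSpace Ω') (P : Measure Ω') (f : Ω' → EucSp N → ℝ),
    IsProbabilityMeasure P ∧ IsGaussianRF P f ∧ IsStationaryIsotropicRF P f μ C

/-- Sufficient smoothness of a (non-stationary) isotropic kernel: the partial
derivatives `κ₁₂, κ₁₃, κ₂₃, κ₃₃` exist and are continuous. -/
def KernelSufficientlySmooth (κ : ℝ → ℝ → ℝ → ℝ) : Prop :=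
  ∃ κ₁ κ₂ κ₃ κ₁₂ κ₁₃ κ₂₃ κ₃₃ : ℝ → ℝ → ℝ → ℝ,
    (∀ a b c, HasDerivAt (fun t => κ t b c) (κ₁ a b c) a) ∧
    (∀ a b c, HasDerivAt (fun t => κ a t c) (κ₂ a b c) b) ∧
    (∀ a b c, HasDerivAt (fun t => κ a b t) (κ₃ a b c) c) ∧
    (∀ a b c, HasDerivAt (fun t => κ₁ a t c) (κ₁₂ a b c) b) ∧
    (∀ a b c, HasDerivAt (fun t => κ₁ a b t) (κ₁₃ a b c) c) ∧
    (∀ a b c, HasDerivAt (fun t => κ₂ a b t) (κ₂₃ a b c) c) ∧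
    (∀ a b c, HasDerivAt (fun t => κ₃ a b t) (κ₃₃ a b c) c) ∧
    Continuous (fun p : ℝ × ℝ × ℝ => κ₁₂ p.1 p.2.1 p.2.2) ∧
    Continuous (fun p : ℝ × ℝ × ℝ => κ₁₃ p.1 p.2.1 p.2.2) ∧
    Continuous (fun p : ℝ × ℝ × ℝ => κ₂₃ p.1 p.2.1 p.2.2) ∧
    Continuous (fun p : ℝ × ℝ × ℝ => κ₃₃ p.1 p.2.1 p.2.2)

/-- Sufficient smoothness of the mean: a continuous derivative exists. -/
def MeanSufficientlySmooth (μ : ℝ → ℝ) : Prop :=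
  ∃ μ' : ℝ → ℝ, (∀ a, HasDerivAt μ (μ' a) a) ∧ Continuous μ'

/-- Strict positive definiteness of the pair `(f, ∇f)`: any vanishing variance of a
finite linear combination of values and gradient entries at distinct points forces
all coefficients to vanish. -/
def StrictPosDefPair {Ω : Type*} [MeasurableSpace Ω] (P : Measure Ω) {N : ℕ}
    (f : Ω → EucSp N → ℝ) : Prop :=
  ∀ (n : ℕ) (x : Fin n → EucSp N), Function.Injective x →
    ∀ (w : Fin n → ℝ) (u : Fin n → EucSp N),
      variance (fun ω => ∑ i, (w i * f ω (x i) + ⟪u i, gradient (f ω) (x i)⟫_ℝ)) P = 0 →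
      ∀ i, w i = 0 ∧ u i = 0

/-- The dimensionless information: values of the function along the path together with
all inner products of `x₀` and the encountered gradients. -/
abbrev InfoVec : Type := (ℕ → ℝ) × (ℕ → ℕ → ℝ)

/-- A general gradient span algorithm, given by its prefactors, which are functions
of the dimensionless information. -/
structure GSA where
  hx : ℕ → InfoVec → ℝ
  hg : ℕ → ℕ → InfoVec → ℝ

/-- The information vector `I_n` available at time `n`: function values `f(x_k)`, `k ≤ n`,
and all inner products of the vectors `x₀, ∇f(x₀), …, ∇f(x_n)` (encoded with index `0`
for `x₀` and index `k+1` for `∇f(x_k)`; entries beyond the horizon are set to `0`). -/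
def information {N : ℕ} (f : EucSp N → ℝ) (x : ℕ → EucSp N) (n : ℕ) : InfoVec :=
  (fun k => if k ≤ n then f (x k) else 0,
   fun i j =>
     (let v : ℕ → EucSp N := fun i =>
        if i = 0 then x 0 else if i - 1 ≤ n then gradient f (x (i - 1)) else 0
      ⟪v i, v j⟫_ℝ))

/-- The reduced information vector `I_n^{∖x₀}`: function values and inner products of
gradients only. -/
def redInformation {N : ℕ} (f : EucSp N → ℝ) (x : ℕ → EucSp N) (n : ℕ) : InfoVec :=
  (fun k => if k ≤ n then f (x k) else 0,
   fun k l => if k ≤ n ∧ l ≤ n then ⟪gradient f (x k), gradient f (x l)⟫_ℝ else 0)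

/-- `x` is the path produced by the gradient span algorithm `G` applied to `f` with
starting point `x₀`:  `x_{n+1} = h^{(x)}_{n+1}(I_n)·x₀ + ∑_{k ≤ n} h^{(g)}_{n+1,k}(I_n)·∇f(x_k)`. -/
def GSA.IsPath {N : ℕ} (G : GSA) (f : EucSp N → ℝ) (x0 : EucSp N) (x : ℕ → EucSp N) : Prop :=
  x 0 = x0 ∧
  ∀ n : ℕ, x (n + 1) =
    G.hx (n + 1) (information f x n) • x0 +
      ∑ k ∈ Finset.range (n + 1), G.hg (n + 1) k (information f x n) • gradient f (x k)

/-- `G` is `x₀`-agnostic: it stays in the span shifted by `x₀` (`h^{(x)} = 1`) and its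
prefactors depend only on the reduced information (no inner products with `x₀`). -/
def GSA.X0Agnostic (G : GSA) : Prop :=
  (∀ n ι, G.hx n ι = 1) ∧
  (∀ n k (ι ι' : InfoVec), ι.1 = ι'.1 →
    (∀ i j : ℕ, ι.2 (i + 1) (j + 1) = ι'.2 (i + 1) (j + 1)) → G.hg n k ι = G.hg n k ι')

/-- The family of vectors `x₀, ∇f(x₀), ∇f(x₁), …` generating the previsible vector spaces of
evaluation points. -/
def gsVecs {N : ℕ} (f : EucSp N → ℝ) (x : ℕ → EucSp N) : ℕ → EucSp N
  | 0 => x 0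
  | k + 1 => gradient f (x k)

/-- `d_n`: the dimension of the previsible vector space of evaluation points
`V_n = span{x₀, ∇f(x_k) : k < n}`. -/
def dimSpan {N : ℕ} (f : EucSp N → ℝ) (x : ℕ → EucSp N) (n : ℕ) : ℕ :=
  Module.finrank ℝ (Submodule.span ℝ (gsVecs f x '' Set.Iic n))

/-- The modified information vector `Î_n`: function values along the path together with
the inner products of the Gram–Schmidt orthonormal coordinate system with the gradients
(truncated to the relevant range). -/
def minfoAt {N : ℕ} (f : EucSp N → ℝ) (x : ℕ → EucSp N) (n : ℕ) : InfoVec :=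
  (fun k => if k ≤ n then f (x k) else 0,
   fun i k => if i < n + 2 ∧ k ≤ n then
      ⟪InnerProductSpace.gramSchmidtNormed ℝ (gsVecs f x) i, gradient f (x k)⟫_ℝ else 0)

/-- Strict positive definiteness of `(f, ∇f, (∂_{ij}f)_{i≤j}, …)` up to order `k`:
coefficients are indexed by points, by the order `l ≤ k` of differentiation and by sorted
(monotone) index tuples `i₁ ≤ … ≤ i_l`. -/
def StrictPosDefDerivs {Ω : Type*} [MeasurableSpace Ω] (P : Measure Ω) {N : ℕ}
    (f : Ω → EucSp N → ℝ) (k : ℕ) : Prop :=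
  ∀ (n : ℕ) (x : Fin n → EucSp N), Function.Injective x →
    ∀ w : (j : Fin n) → (l : Fin (k + 1)) → ((Fin (l : ℕ) → Fin N) → ℝ),
      (∀ j l idx, ¬ Monotone idx → w j l idx = 0) →
      variance (fun ω => ∑ j, ∑ l : Fin (k + 1), ∑ idx : Fin (l : ℕ) → Fin N,
        w j l idx *
          iteratedFDeriv ℝ (l : ℕ) (f ω) (x j) (fun s => EuclideanSpace.single (idx s) 1)) P
        = 0 →
      ∀ j l idx, w j l idx = 0

end

/-! If `U` is the linear part of the isometry `φ`, then `∇(f ∘ φ)(φ⁻¹ x) = U⁻¹ ∇f(x)`. Hence the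
transported path `φ⁻¹ ∘ x` produces the same function values and the same inner products among
gradients as `x`; when `φ` is linear also the same inner products with the starting point, and
`φ⁻¹` commutes with the linear combination defining the next iterate. For an affine `φ` both
properties can fail, which is what `x₀`-agnosticism repairs. So `φ⁻¹ ∘ x` satisfies the recursion of
the algorithm on `f ∘ φ` from `φ⁻¹ x₀`, and this recursion determines its path uniquely. -/

open InnerProductSpace

section Gradient

variable {E F : Type*} [NormedAddCommGroup E] [InnerProductSpace ℝ E] [CompleteSpace E]
  [NormedAddCommGroup F] [InnerProductSpace ℝ F] [CompleteSpace F]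

-- Where `f` is not differentiable, both sides are the junk value `0`.
theorem LinearIsometryEquiv.gradient_comp (φ : E ≃ₗᵢ[ℝ] F) (f : F → ℝ) (x : E) :
    gradient (f ∘ φ) x = φ.symm (gradient f (φ x)) := by
  have hfderiv := φ.toContinuousLinearEquiv.comp_right_fderiv (𝕜 := ℝ) (f := f) (x := x)
  refine ext_inner_right ℝ fun v => ?_
  rw [φ.symm.inner_map_eq_flip, φ.symm_symm, gradient, gradient, toDual_symm_apply,
    toDual_symm_apply]
  exact DFunLike.congr_fun hfderiv v

theorem gradient_comp_add_right (f : E → ℝ) (a x : E) :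
    gradient (fun z => f (z + a)) x = gradient f (x + a) := by
  rw [gradient, gradient, fderiv_comp_add_right]

theorem AffineIsometryEquiv.gradient_comp (φ : E ≃ᵃⁱ[ℝ] F) (f : F → ℝ) (x : E) :
    gradient (f ∘ φ) x = φ.linearIsometryEquiv.symm (gradient f (φ x)) := by
  have hφ : f ∘ φ = (fun z => f (z + φ 0)) ∘ φ.linearIsometryEquiv := by
    ext z
    simpa using congrArg f (φ.map_vadd 0 z)
  rw [hφ, LinearIsometryEquiv.gradient_comp, gradient_comp_add_right]
  simpa using congrArg (fun p => φ.linearIsometryEquiv.symm (gradient f p)) (φ.map_vadd 0 x).symm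

end Gradient

namespace GSA

variable {N : ℕ}

theorem information_congr (f : EucSp N → ℝ) {x y : ℕ → EucSp N} {n : ℕ}
    (h : ∀ k ≤ n, x k = y k) : information f x n = information f y n := by
  simp +contextual [information, h]

theorem IsPath.eq {G : GSA} {f : EucSp N → ℝ} {x0 : EucSp N} {x y : ℕ → EucSp N}
    (hx : G.IsPath f x0 x) (hy : G.IsPath f x0 y) : x = y := by
  funext n
  induction n using Nat.strong_induction_on with
  | _ n ih =>
    cases n with
    | zero => rw [hx.1, hy.1]
    | succ n =>
      have hle : ∀ k ≤ n, x k = y k := fun k hk => ih k (Nat.lt_succ_of_le hk)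
      rw [hx.2, hy.2, information_congr f hle]
      refine congrArg _ (Finset.sum_congr rfl fun k hk => ?_)
      rw [hle k (Finset.mem_range_succ_iff.mp hk)]

theorem information_comp_linearIsometryEquiv (φ : EucSp N ≃ₗᵢ[ℝ] EucSp N) (f : EucSp N → ℝ)
    (x : ℕ → EucSp N) (n : ℕ) : information (f ∘ φ) (φ.symm ∘ x) n = information f x n := by
  simp only [information, Function.comp_apply, φ.apply_symm_apply, φ.gradient_comp]
  congr 1
  funext i j
  split_ifs <;> simp only [φ.symm.inner_map_map, inner_zero_left, inner_zero_right]

theorem information_comp_affineIsometryEquiv_fst (φ : EucSp N ≃ᵃⁱ[ℝ] EucSp N)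
    (f : EucSp N → ℝ) (x : ℕ → EucSp N) (n : ℕ) :
    (information (f ∘ φ) (φ.symm ∘ x) n).1 = (information f x n).1 := by
  simp [information]

theorem information_comp_affineIsometryEquiv_snd_succ (φ : EucSp N ≃ᵃⁱ[ℝ] EucSp N)
    (f : EucSp N → ℝ) (x : ℕ → EucSp N) (n i j : ℕ) :
    (information (f ∘ φ) (φ.symm ∘ x) n).2 (i + 1) (j + 1) =
      (information f x n).2 (i + 1) (j + 1) := by
  simp only [information, Function.comp_apply, φ.apply_symm_apply, φ.gradient_comp,
    Nat.add_one_ne_zero, if_false, Nat.add_sub_cancel]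
  split_ifs <;> simp only [LinearIsometryEquiv.inner_map_map, inner_zero_left, inner_zero_right]

theorem IsPath.comp_linearIsometryEquiv {G : GSA} {f : EucSp N → ℝ} {x0 : EucSp N}
    {x : ℕ → EucSp N} (hx : G.IsPath f x0 x) (φ : EucSp N ≃ₗᵢ[ℝ] EucSp N) :
    G.IsPath (f ∘ φ) (φ.symm x0) (φ.symm ∘ x) := by
  refine ⟨congrArg φ.symm hx.1, fun n => ?_⟩
  rw [information_comp_linearIsometryEquiv, Function.comp_apply, hx.2 n, map_add, map_smul,
    map_sum]
  refine congrArg _ (Finset.sum_congr rfl fun k _ => ?_)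
  rw [map_smul, Function.comp_apply, φ.gradient_comp, φ.apply_symm_apply]

theorem IsPath.comp_affineIsometryEquiv {G : GSA} (hG : G.X0Agnostic) {f : EucSp N → ℝ}
    {x0 : EucSp N} {x : ℕ → EucSp N} (hx : G.IsPath f x0 x) (φ : EucSp N ≃ᵃⁱ[ℝ] EucSp N) :
    G.IsPath (f ∘ φ) (φ.symm x0) (φ.symm ∘ x) := by
  have hhg : ∀ n k, G.hg (n + 1) k (information (f ∘ φ) (φ.symm ∘ x) n) =
      G.hg (n + 1) k (information f x n) := fun n k =>
    hG.2 _ _ _ _ (information_comp_affineIsometryEquiv_fst φ f x n)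
      (information_comp_affineIsometryEquiv_snd_succ φ f x n)
  have hsymm_add : ∀ v, φ.symm (x0 + v) = φ.symm x0 + φ.linearIsometryEquiv.symm v :=
    fun v => by rw [add_comm, add_comm (φ.symm x0)]; exact φ.symm.map_vadd x0 v
  refine ⟨congrArg φ.symm hx.1, fun n => ?_⟩
  rw [Function.comp_apply, hx.2 n, hG.1, hG.1, one_smul, one_smul, hsymm_add, map_sum]
  refine congrArg _ (Finset.sum_congr rfl fun k _ => ?_)
  rw [map_smul, hhg, Function.comp_apply, φ.gradient_comp, φ.apply_symm_apply]

end GSA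

theorem gsa_invariant_under_isometries_general
    {N : ℕ} (G : GSA) (f : EucSp N → ℝ) :
    (∀ (φ : EucSp N ≃ₗᵢ[ℝ] EucSp N) (x0 : EucSp N) (x y : ℕ → EucSp N),
      G.IsPath f x0 x →
      G.IsPath (f ∘ φ) (φ.symm x0) y →
      ∀ n : ℕ, y n = φ.symm (x n)) ∧
    (G.X0Agnostic →
      ∀ (φ : EucSp N ≃ᵃⁱ[ℝ] EucSp N) (x0 : EucSp N) (x y : ℕ → EucSp N),
        G.IsPath f x0 x →
        G.IsPath (f ∘ φ) (φ.symm x0) y →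
        ∀ n : ℕ, y n = φ.symm (x n)) :=
  ⟨fun φ _ _ _ hx hy => congrFun (hy.eq (hx.comp_linearIsometryEquiv φ)),
    fun hG φ _ _ _ hx hy => congrFun (hy.eq (hx.comp_affineIsometryEquiv hG φ))⟩

/-- Lemma: linear isometry invariance of gradient span algorithms.
If `x` is the path of a gradient span algorithm `𝔊` on `f` from `x₀` and `y` is the path of
`𝔊` on `g := f ∘ φ` from `y₀ := φ⁻¹(x₀)` for a linear isometry `φ`, then `y_n = φ⁻¹(x_n)` for
all `n`.  The same holds for every (affine) isometry `φ(x) = Ux + b` provided `𝔊` is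
`x₀`-agnostic. -/
theorem gsa_invariant_under_isometries
    {N : ℕ} (G : GSA) (f : EucSp N → ℝ) (hf : Differentiable ℝ f) :
    (∀ (φ : EucSp N ≃ₗᵢ[ℝ] EucSp N) (x0 : EucSp N) (x y : ℕ → EucSp N),
      G.IsPath f x0 x →
      G.IsPath (f ∘ φ) (φ.symm x0) y →
      ∀ n : ℕ, y n = φ.symm (x n)) ∧
    (G.X0Agnostic →
      ∀ (φ : EucSp N ≃ᵃⁱ[ℝ] EucSp N) (x0 : EucSp N) (x y : ℕ → EucSp N),
        G.IsPath f x0 x →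
        G.IsPath (f ∘ φ) (φ.symm x0) y →
        ∀ n : ℕ, y n = φ.symm (x n)) :=
  gsa_invariant_under_isometries_general G f
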